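/- Theorem 4.5: Let (U, Δ, 𝒟) be a covering decision information system with Δ = (𝒞₁, …, 𝒞ₘ), let 𝒞ₘ⁻ be a coarsening of 𝒞ₘ and Δ⁻ = (𝒞₁, …, 𝒞ₘ₋₁, 𝒞ₘ⁻). If POS_{∪Δ}(𝒟) ≠ POS_{∪Δ⁻}(𝒟), then for every x ∈ POS_{∪Δ}(𝒟) \ POS_{∪Δ⁻}(𝒟) one has r(x) = {m} and r⁻(x) = ∅. -/

import Mathlib

open Set

/-- A covering of `U`: a family of nonempty subsets whose union is all of `U`. -/
def IsCovering {U : Type*} (𝒞 : Set (Set U)) : Prop :=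
  (∀ C ∈ 𝒞, C.Nonempty) ∧ ⋃₀ 𝒞 = Set.univ

/-- A partition of `U`: a covering whose blocks are pairwise disjoint. -/
def IsPartitionC {U : Type*} (𝒟 : Set (Set U)) : Prop :=
  IsCovering 𝒟 ∧ ∀ D₁ ∈ 𝒟, ∀ D₂ ∈ 𝒟, D₁ ≠ D₂ → Disjoint D₁ D₂

/-- `𝒜_𝒞 = {C ∈ 𝒞 : ∃ D ∈ 𝒟, C ⊆ D}`: blocks of `𝒞` contained in some decision class. -/
def goodBlocks {U : Type*} (𝒟 𝒞 : Set (Set U)) : Set (Set U) :=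
  {C ∈ 𝒞 | ∃ D ∈ 𝒟, C ⊆ D}

/-- The related set `r(x)` of `x`: indices `i` such that some block of `𝒞ᵢ` contains `x`
and is contained in some decision class. -/
def relSet {U : Type*} {m : ℕ} (Δ : Fin m → Set (Set U)) (𝒟 : Set (Set U)) (x : U) :
    Set (Fin m) :=
  {i | ∃ C ∈ Δ i, x ∈ C ∧ ∃ D ∈ 𝒟, C ⊆ D}

/-- The positive region `POS_{∪Δ}(𝒟) = ⋃_{D ∈ 𝒟} ⋃ {K : K a block of some 𝒞ᵢ, K ⊆ D}`. -/
def POS {U : Type*} {m : ℕ} (Δ : Fin m → Set (Set U)) (𝒟 : Set (Set U)) : Set U :=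
  ⋃ D ∈ 𝒟, ⋃₀ {K | (∃ i, K ∈ Δ i) ∧ K ⊆ D}

/-- `𝒞'` refines `𝒞` (and `𝒞` coarsens `𝒞'`): every block of `𝒞'` is inside a block of `𝒞`. -/
def Refines {U : Type*} (𝒞' 𝒞 : Set (Set U)) : Prop :=
  ∀ C ∈ 𝒞', ∃ C₀ ∈ 𝒞, C ⊆ C₀

/-- `P` is a reduct of `(U, Δ, 𝒟)`: `P` meets `r(x)` for every `x` in the positive region,
and no proper subset of `P` has this property. -/
def IsReduct {U : Type*} {m : ℕ} (Δ : Fin m → Set (Set U)) (𝒟 : Set (Set U))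
    (P : Set (Fin m)) : Prop :=
  (∀ x ∈ POS Δ 𝒟, (P ∩ relSet Δ 𝒟 x).Nonempty) ∧
  ∀ Q : Set (Fin m), Q ⊂ P → ¬ (∀ x ∈ POS Δ 𝒟, (Q ∩ relSet Δ 𝒟 x).Nonempty)

/-
A point lies in the positive region exactly when its related set is nonempty. Replacing the
last covering changes no other index of the related set, so a point that leaves the positive
region had no related index but the last one, and has none at all afterwards.
-/

theorem mem_POS_iff_relSet_nonempty {U : Type*} {m : ℕ} (Δ : Fin m → Set (Set U))
    (𝒟 : Set (Set U)) (x : U) : x ∈ POS Δ 𝒟 ↔ (relSet Δ 𝒟 x).Nonempty := by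
  simp only [POS, mem_iUnion, mem_sUnion, mem_ofPred_eq]
  constructor
  · rintro ⟨D, hD, K, ⟨⟨i, hK⟩, hKD⟩, hxK⟩
    exact ⟨i, K, hK, hxK, D, hD, hKD⟩
  · rintro ⟨i, C, hC, hxC, D, hD, hCD⟩
    exact ⟨D, hD, C, ⟨⟨i, hC⟩, hCD⟩, hxC⟩

theorem relSet_eq_empty_of_notMem_POS {U : Type*} {m : ℕ} {Δ : Fin m → Set (Set U)}
    {𝒟 : Set (Set U)} {x : U} (hx : x ∉ POS Δ 𝒟) : relSet Δ 𝒟 x = ∅ := by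
  rwa [mem_POS_iff_relSet_nonempty, not_nonempty_iff_eq_empty] at hx

theorem mem_relSet_update_of_ne {U : Type*} {m : ℕ} {Δ : Fin m → Set (Set U)}
    {𝒟 : Set (Set U)} {x : U} {i j : Fin m} (𝒞 : Set (Set U)) (hij : i ≠ j)
    (hi : i ∈ relSet Δ 𝒟 x) : i ∈ relSet (Function.update Δ j 𝒞) 𝒟 x := by
  rwa [relSet, mem_ofPred_eq, Function.update_of_ne hij]

theorem stmt16_general {U : Type*} {m : ℕ}
    (Δ : Fin (m + 1) → Set (Set U)) (𝒟 : Set (Set U))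
    (Cm : Set (Set U))
    (Δm : Fin (m + 1) → Set (Set U))
    (hΔm : Δm = Function.update Δ (Fin.last m) Cm) :
    ∀ x ∈ POS Δ 𝒟 \ POS Δm 𝒟,
      relSet Δ 𝒟 x = {Fin.last m} ∧ relSet Δm 𝒟 x = ∅ := by
  rintro x ⟨hx, hxm⟩
  have hempty : relSet Δm 𝒟 x = ∅ := relSet_eq_empty_of_notMem_POS hxm
  have honly : ∀ i ∈ relSet Δ 𝒟 x, i = Fin.last m := by
    intro i hi
    by_contra hne
    have hi' := mem_relSet_update_of_ne Cm hne hi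
    rw [← hΔm, hempty] at hi'
    exact hi'
  obtain ⟨i, hi⟩ := (mem_POS_iff_relSet_nonempty Δ 𝒟 x).1 hx
  obtain rfl := honly i hi
  exact ⟨eq_singleton_iff_unique_mem.2 ⟨hi, honly⟩, hempty⟩

/-- Theorem 4.5: if `POS_{∪Δ}(𝒟) ≠ POS_{∪Δ⁻}(𝒟)`, then for every
`x ∈ POS_{∪Δ}(𝒟) \ POS_{∪Δ⁻}(𝒟)` one has `r(x) = {m}` and `r⁻(x) = ∅`. -/
theorem stmt16 {U : Type*} [Finite U] [Nonempty U] {m : ℕ}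
    (Δ : Fin (m + 1) → Set (Set U)) (𝒟 : Set (Set U))
    (hΔ : ∀ i, IsCovering (Δ i)) (h𝒟 : IsPartitionC 𝒟)
    (Cm : Set (Set U)) (hCm : IsCovering Cm)
    (hcoar : Refines (Δ (Fin.last m)) Cm)
    (Δm : Fin (m + 1) → Set (Set U))
    (hΔm : Δm = Function.update Δ (Fin.last m) Cm)
    (hne : POS Δ 𝒟 ≠ POS Δm 𝒟) :
    ∀ x ∈ POS Δ 𝒟 \ POS Δm 𝒟,
      relSet Δ 𝒟 x = {Fin.last m} ∧ relSet Δm 𝒟 x = ∅ :=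
  stmt16_general Δ 𝒟 Cm Δm hΔm
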